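/- With the matching {(α, φ(α)) : α ∈ A} defined above, if η > α with η ∈ A ∪ B and η ≠ φ(α), then (i(η), −dim η) is lexicographically strictly smaller than (i(α), −dim α); i.e., either i(η) < i(α), or i(η) = i(α) and dim η > dim α (when η ∈ A), or η = φ(α̃) with i(α̃) = i(α) and dim α̃ > dim α. Consequently, the matching is acyclic in the sense of discrete Morse theory. -/
import Mathlib


open Classical

/-- The face poset of `Hom(H,G)`: functions assigning to each vertex of `H` a
nonempty finite set of vertices of `G`, satisfying the complete-bipartite edge
condition; ordered by pointwise inclusion. -/
def homFacePoset {VG VH : Type*} (H : SimpleGraph VH) (G : SimpleGraph VG) :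
    Set (VH → Finset VG) :=
  {η | (∀ x, (η x).Nonempty) ∧ ∀ x y, H.Adj x y → ∀ a ∈ η x, ∀ b ∈ η y, G.Adj a b}

/-- `dim η = Σ_x (|η(x)| − 1)`. -/
def homDim {VG VH : Type*} [Fintype VH] (η : VH → Finset VG) : ℕ :=
  ∑ x : VH, ((η x).card - 1)

/-- The least vertex `x` of `H` (in the given linear order) with `v ∈ η x`. -/
noncomputable def minIdx {VG VH : Type*} [Fintype VH] [LinearOrder VH] [Nonempty VH]
    (v : VG) (η : VH → Finset VG) : VH :=
  if h : (Finset.univ.filter (fun x => v ∈ η x)).Nonempty then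
    (Finset.univ.filter (fun x => v ∈ η x)).min' h
  else Classical.arbitrary VH

section Aux
variable {VG VH : Type*} [Fintype VH] [LinearOrder VH] [Nonempty VH]

lemma minIdx_mem' {v : VG} {η : VH → Finset VG} {x : VH} (hx : v ∈ η x) :
    v ∈ η (minIdx v η) := by
  have hne : (Finset.univ.filter (fun y => v ∈ η y)).Nonempty :=
    ⟨x, by simp [hx]⟩
  have h := (Finset.univ.filter (fun y => v ∈ η y)).min'_mem hne
  simp only [minIdx, dif_pos hne]
  simpa using h

lemma minIdx_le' {v : VG} {η : VH → Finset VG} {x : VH} (hx : v ∈ η x) :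
    minIdx v η ≤ x := by
  have hne : (Finset.univ.filter (fun y => v ∈ η y)).Nonempty :=
    ⟨x, by simp [hx]⟩
  simp only [minIdx, dif_pos hne]
  exact Finset.min'_le _ _ (by simp [hx])

lemma homDim_mono' {α η : VH → Finset VG} (hle : ∀ x, α x ⊆ η x) :
    homDim α ≤ homDim η :=
  Finset.sum_le_sum fun i _ => Nat.sub_le_sub_right (Finset.card_le_card (hle i)) 1

lemma eq_of_le_of_dim_le' {α η : VH → Finset VG} (hle : ∀ x, α x ⊆ η x)
    (hne : ∀ x, (α x).Nonempty) (hdim : homDim η ≤ homDim α) : α = η := by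
  have hcard : ∀ x, (η x).card ≤ (α x).card := by
    by_contra h
    push_neg at h
    obtain ⟨x, hx⟩ := h
    have hlt : homDim α < homDim η := by
      apply Finset.sum_lt_sum
      · intro i _
        exact Nat.sub_le_sub_right (Finset.card_le_card (hle i)) 1
      · refine ⟨x, Finset.mem_univ x, ?_⟩
        have h1 : 1 ≤ (α x).card := Finset.card_pos.mpr (hne x)
        omega
    omega
  funext x
  exact Finset.eq_of_subset_of_card_le (hle x) (hcard x)

end Aux

/-- For the matching `{(α, Φ α) : α ∈ A}` associated to a fold `G − v` of `G`
witnessed by `u`: if `η > α`, `η ∈ A ∪ B`, `η ≠ Φ α`, then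
`(i(η), −dim η) <lex (i(α), −dim α)`, i.e. `i(η) < i(α)`, or `i(η) = i(α)` and
`dim η > dim α`.  Consequently the matching is acyclic: there is no nontrivial
cycle `a₀, a₁, …, aₙ = a₀` in `A` with `a_{k+1} < Φ(a_k)`, `a_{k+1} ≠ a_k`, and
`dim a_{k+1} = dim a_k`. -/
theorem stmt_15 {VG VH : Type*} [Fintype VH] [LinearOrder VH] [Nonempty VH]
    (G : SimpleGraph VG) (H : SimpleGraph VH)
    (v u : VG) (huv : u ≠ v) (hfold : G.neighborSet v ⊆ G.neighborSet u) :
    letI S := homFacePoset H G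
    letI A : Set (VH → Finset VG) :=
      {η ∈ S | (∃ x, v ∈ η x) ∧ u ∉ η (minIdx v η)}
    letI B : Set (VH → Finset VG) :=
      {η ∈ S | (∃ x, v ∈ η x) ∧ u ∈ η (minIdx v η)}
    letI Φ : (VH → Finset VG) → (VH → Finset VG) :=
      fun η => Function.update η (minIdx v η) (insert u (η (minIdx v η)))
    (∀ α ∈ A, ∀ η ∈ A ∪ B, α < η → η ≠ Φ α →
      (minIdx v η < minIdx v α ∨
        (minIdx v η = minIdx v α ∧ homDim α < homDim η))) ∧
    ¬ ∃ (n : ℕ) (a : ℕ → VH → Finset VG), 0 < n ∧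
        (∀ k ≤ n, a k ∈ A) ∧
        (∀ k < n, a (k + 1) ≠ a k ∧ a (k + 1) < Φ (a k) ∧
          homDim (a (k + 1)) = homDim (a k)) ∧
        a n = a 0 := by
  constructor
  · -- Part 1
    rintro α ⟨hαS, ⟨x₀, hx₀⟩, hu⟩ η hη hlt hneΦ
    have hle : ∀ x, α x ⊆ η x := fun x => Finset.le_iff_subset.mp (hlt.le x)
    have hvα : v ∈ α (minIdx v α) := minIdx_mem' hx₀
    have hvη : v ∈ η (minIdx v α) := hle _ hvα
    have hle' : minIdx v η ≤ minIdx v α := minIdx_le' hvη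
    rcases lt_or_eq_of_le hle' with h | h
    · exact Or.inl h
    · refine Or.inr ⟨h, ?_⟩
      have hne : α ≠ η := hlt.ne
      have hmono := homDim_mono' (α := α) (η := η) hle
      rcases lt_or_eq_of_le hmono with h' | h'
      · exact h'
      · exact absurd (eq_of_le_of_dim_le' hle hαS.1 h'.ge) hne
  · -- Part 2 : acyclicity
    rintro ⟨n, a, hn, hA, hstep, hcyc⟩
    have hΦle : ∀ k < n, ∀ x,
        a (k + 1) x ⊆ Function.update (a k) (minIdx v (a k))
          (insert u (a k (minIdx v (a k)))) x :=
      fun k hk x => Finset.le_iff_subset.mp ((hstep k hk).2.1.le x)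
    -- membership of v in the update iff in the original
    have hupd : ∀ (β : VH → Finset VG) (x : VH),
        v ∈ Function.update β (minIdx v β) (insert u (β (minIdx v β))) x →
        v ∈ β x := by
      intro β x hx
      by_cases hxi : x = minIdx v β
      · subst hxi
        rw [Function.update_self] at hx
        rcases Finset.mem_insert.mp hx with h | h
        · exact absurd h.symm huv
        · exact h
      · rwa [Function.update_of_ne hxi] at hx
    have hvk : ∀ k ≤ n, v ∈ a k (minIdx v (a k)) := by
      intro k hk
      obtain ⟨-, ⟨x, hx⟩, -⟩ := hA k hk
      exact minIdx_mem' hx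
    have hmono : ∀ k < n, minIdx v (a k) ≤ minIdx v (a (k + 1)) := by
      intro k hk
      have hv1 : v ∈ a (k + 1) (minIdx v (a (k + 1))) := hvk (k + 1) hk
      have := hΦle k hk _ hv1
      exact minIdx_le' (hupd (a k) _ this)
    -- minIdx is constant along the cycle; in particular at steps 0 and 1
    have hchain : ∀ j, 1 ≤ j → j ≤ n → minIdx v (a 1) ≤ minIdx v (a j) := by
      intro j
      induction j with
      | zero => omega
      | succ m ih =>
        intro _ hm
        by_cases hm0 : m = 0
        · subst hm0; exact le_refl _
        · exact le_trans (ih (by omega) (by omega)) (hmono m (by omega))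
    have h1n : minIdx v (a 1) ≤ minIdx v (a n) := hchain n hn (le_refl n)
    have hn0 : minIdx v (a n) = minIdx v (a 0) := by rw [hcyc]
    have h10 : minIdx v (a 1) = minIdx v (a 0) :=
      le_antisymm (hn0 ▸ h1n) (hmono 0 hn)
    -- now a 1 ⊆ a 0 pointwise
    obtain ⟨-, -, hu1⟩ := hA 1 hn
    rw [h10] at hu1
    have hle10 : ∀ x, a 1 x ⊆ a 0 x := by
      intro x y hy
      have hy' := hΦle 0 hn x hy
      by_cases hxi : x = minIdx v (a 0)
      · subst hxi
        rw [Function.update_self] at hy'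
        rcases Finset.mem_insert.mp hy' with h | h
        · exact absurd (h ▸ hy) hu1
        · exact h
      · rwa [Function.update_of_ne hxi] at hy'
    obtain ⟨hne10, -, hdim10⟩ := hstep 0 hn
    obtain ⟨hS1, -, -⟩ := hA 1 hn
    exact hne10 (eq_of_le_of_dim_le' hle10 hS1.1 hdim10.ge)
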